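/- arXiv:2201.12050 — 4 statements merged into one kernel-verified Lean document; each statement's English description precedes it below -/
import Mathlib

section
/- Let k ∈ ℝ, d ∈ ℝ, a = (0, d, 0) ∈ ℝ³, let σ : ℝ³ → ℝ³ be the reflection σ(y₁, y₂, y₃) = (y₁, −y₂, y₃) across the plane {x₂ = 0}, and let p, q ∈ ℝ³ and M ∈ ℕ with p + i·a ≠ σ(q + j·a) for all i, j ∈ Fin M. Then the mirror-image kernel matrix Ĥ indexed by Fin M with entries Ĥ i j = G(p + i·a, σ(q + j·a)) is Hankel: Ĥ i j = Ĥ i' j' whenever (i : ℕ) + j = (i' : ℕ) + j'. -/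
/-- The free-space Helmholtz Green's function on ℝ³:
`G(x, y) = exp(i k ‖x − y‖) / (4π ‖x − y‖)`, meaningful for `x ≠ y`. -/
noncomputable def helmholtzG (k : ℝ) (x y : EuclideanSpace ℝ (Fin 3)) : ℂ :=
  Complex.exp (Complex.I * (k : ℂ) * (‖x - y‖ : ℂ)) /
    (4 * (Real.pi : ℂ) * (‖x - y‖ : ℂ))

/-- Reflection `σ(y₁, y₂, y₃) = (y₁, −y₂, y₃)` across the plane `{x₂ = 0}`. -/
noncomputable def mirrorY (y : EuclideanSpace ℝ (Fin 3)) : EuclideanSpace ℝ (Fin 3) :=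
  WithLp.toLp 2 (fun i : Fin 3 => if i = 1 then -(y i) else y i)

/-- The translation vector `a = (0, d, 0)`. -/
noncomputable def transY (d : ℝ) : EuclideanSpace ℝ (Fin 3) :=
  WithLp.toLp 2 (fun i : Fin 3 => if i = 1 then d else 0)

/-! The reflection `σ` reverses translations by `a`, so the separation vector
`(p + i a) - σ(q + j a) = (p - σ q) + (i + j) a` depends only on `i + j`, and `G(x, y)`
depends only on `x - y`. -/

theorem helmholtzG_eq_of_sub_eq (k : ℝ) {x y x' y' : EuclideanSpace ℝ (Fin 3)}
    (h : x - y = x' - y') : helmholtzG k x y = helmholtzG k x' y' := by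
  rw [helmholtzG, helmholtzG, h]

theorem mirrorY_add_nsmul_transY (q : EuclideanSpace ℝ (Fin 3)) (n : ℕ) (d : ℝ) :
    mirrorY (q + n • transY d) = mirrorY q - n • transY d := by
  ext m
  by_cases hm : m = 1 <;> simp [mirrorY, transY, hm, sub_eq_add_neg, add_comm]

theorem add_nsmul_transY_sub_mirrorY (p q : EuclideanSpace ℝ (Fin 3)) (i j : ℕ) (d : ℝ) :
    p + i • transY d - mirrorY (q + j • transY d) = p - mirrorY q + (i + j) • transY d := by
  rw [mirrorY_add_nsmul_transY, add_nsmul]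
  abel

theorem mirror_kernel_matrix_hankel_general (k d : ℝ) (p q : EuclideanSpace ℝ (Fin 3))
    (M : ℕ)
    (H : Matrix (Fin M) (Fin M) ℂ)
    (hH : ∀ i j : Fin M,
      H i j = helmholtzG k (p + (i : ℕ) • transY d) (mirrorY (q + (j : ℕ) • transY d))) :
    ∀ i j i' j' : Fin M, (i : ℕ) + (j : ℕ) = (i' : ℕ) + (j' : ℕ) → H i j = H i' j' := by
  intro i j i' j' hsum
  rw [hH, hH]
  apply helmholtzG_eq_of_sub_eq
  rw [add_nsmul_transY_sub_mirrorY, add_nsmul_transY_sub_mirrorY, hsum]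

/-- The mirror-image kernel matrix `Ĥ i j = G(p + i·a, σ(q + j·a))` for a
periodicity direction `a = (0, d, 0)` perpendicular to the symmetry plane
`{x₂ = 0}` is a Hankel matrix: its entries depend only on `i + j`. -/
theorem mirror_kernel_matrix_hankel (k d : ℝ) (p q : EuclideanSpace ℝ (Fin 3))
    (M : ℕ)
    (hsep : ∀ i j : Fin M,
      p + (i : ℕ) • transY d ≠ mirrorY (q + (j : ℕ) • transY d))
    (H : Matrix (Fin M) (Fin M) ℂ)
    (hH : ∀ i j : Fin M,
      H i j = helmholtzG k (p + (i : ℕ) • transY d) (mirrorY (q + (j : ℕ) • transY d))) :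
    ∀ i j i' j' : Fin M, (i : ℕ) + (j : ℕ) = (i' : ℕ) + (j' : ℕ) → H i j = H i' j' :=
  mirror_kernel_matrix_hankel_general k d p q M H hH
end

section
/- Let M ≥ 1, N = 2M − 1, t : ℤ → ℂ, and let T be the M×M Toeplitz matrix with entries T i j = t((i : ℤ) − j). Define c : ZMod N → ℂ by c(s mod N) = t(s) for every integer s with −(M−1) ≤ s ≤ M−1 (this is well defined since these residues are pairwise distinct in ZMod N). For p : Fin M → ℂ let p̃ : ZMod N → ℂ be its zero-padding, i.e., p̃(l) = p(l) if the representative of l is less than M and p̃(l) = 0 otherwise. Then the Toeplitz matrix-vector product is recovered from the circulant embedding: for every i ∈ Fin M, ((Matrix.circulant c).mulVec p̃)(i mod N) = (T.mulVec p)(i). -/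
/-- The Toeplitz matrix-vector product is recovered from the circulant
embedding: embedding the `M×M` Toeplitz matrix `T i j = t(i − j)` into the
`N×N` circulant matrix generated by `c` (with `N = 2M − 1`) and zero-padding
the vector reproduces `T.mulVec p` in the first `M` entries. -/
theorem toeplitz_mulVec_eq_circulant_embedding (M N : ℕ) (hM : 1 ≤ M)
    (hN : N = 2 * M - 1) [NeZero N]
    (t : ℤ → ℂ)
    (T : Matrix (Fin M) (Fin M) ℂ)
    (hT : ∀ i j : Fin M, T i j = t ((i : ℤ) - (j : ℤ)))
    (c : ZMod N → ℂ)
    (hc : ∀ s : ℤ, -((M : ℤ) - 1) ≤ s → s ≤ (M : ℤ) - 1 → c (s : ZMod N) = t s)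
    (p : Fin M → ℂ)
    (ptilde : ZMod N → ℂ)
    (hp : ∀ l : ZMod N, ptilde l = if h : l.val < M then p ⟨l.val, h⟩ else 0) :
    ∀ i : Fin M,
      (Matrix.circulant c).mulVec ptilde (((i : ℕ) : ZMod N)) = T.mulVec p i := by
  have hMN : M ≤ N := by omega
  intro i
  have hval : ∀ j : Fin M, ((j : ℕ) : ZMod N).val = (j : ℕ) :=
    fun j => ZMod.val_natCast_of_lt (lt_of_lt_of_le j.isLt hMN)
  simp only [Matrix.mulVec, Matrix.circulant, dotProduct, Matrix.of_apply]
  rw [← Finset.sum_filter_of_ne (p := fun l : ZMod N => l.val < M)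
    (by intro l _ hne; by_contra h; apply hne; rw [hp l, dif_neg h, mul_zero])]
  refine Finset.sum_nbij' (fun l => if h : l.val < M then (⟨l.val, h⟩ : Fin M) else ⟨0, hM⟩)
    (fun j => ((j : ℕ) : ZMod N)) ?_ ?_ ?_ ?_ ?_
  · intro l hl; simp
  · intro j _; simp [Finset.mem_filter, hval j, j.isLt]
  · intro l hl
    simp only [Finset.mem_filter, Finset.mem_univ, true_and] at hl
    rw [dif_pos hl]
    simp [ZMod.natCast_val, ZMod.cast_id]
  · intro j _
    rw [dif_pos (by rw [hval j]; exact j.isLt)]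
    ext; simp [hval j]
  · intro l hl
    simp only [Finset.mem_filter, Finset.mem_univ, true_and] at hl
    rw [dif_pos hl, hp l, dif_pos hl, hT]
    congr 1
    have hcast : (((i : ℕ) : ZMod N)) - ((l.val : ℕ) : ZMod N)
        = (((i : ℤ) - (l.val : ℤ) : ℤ) : ZMod N) := by push_cast; ring
    have : ptilde l = ptilde l := rfl
    rw [show ((⟨l.val, hl⟩ : Fin M) : ℤ) = (l.val : ℤ) from rfl]
    rw [show ((l.val : ℕ) : ZMod N) = l from by simp [ZMod.natCast_val, ZMod.cast_id]] at hcast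
    rw [hcast, hc _ (by have := i.isLt; omega) (by have := i.isLt; omega)]
end

section
/- Let M ≥ 1, N = 2M − 1, ζ = exp(2πi/N), t : ℤ → ℂ, and let T be the M×M Toeplitz matrix with entries T i j = t((i : ℤ) − j). Define c : ZMod N → ℂ by c(s mod N) = t(s) for −(M−1) ≤ s ≤ M−1, and λ_j = Σ_{s ∈ ZMod N} c(s) ζ^{−j·s}. Then for every p : Fin M → ℂ and every i ∈ Fin M, (T.mulVec p)(i) = (1/N) Σ_{j ∈ ZMod N} ζ^{i·j} · λ_j · (Σ_{l=0}^{M−1} ζ^{−j·l} p(l)); i.e., T p = F̃⁻¹ Λ F̃ p, where F̃ consists of the first M columns of the N×N Fourier matrix and F̃⁻¹ of the first M rows of its inverse. -/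
/-!
Extend `p` by zero to `ZMod N`. The right-hand side is then the inverse discrete Fourier
transform of the product of the transforms of `c` and of `p`, i.e. the cyclic convolution
`∑ l, c (i - l) * p l`; this follows from the orthogonality `∑ j, ψ (j * d) = N • [d = 0]` of
the primitive character `ψ a = ζ ^ a.val`. For `i, l < M` the residue `i - l` comes from an
integer in `[-(M - 1), M - 1]`, where `c` agrees with `t`.
-/

open Finset

namespace AddChar

variable {A K : Type*} [CommRing A] [Fintype A] [DecidableEq A] [Field K] {ψ : AddChar A K}

theorem IsPrimitive.sum_apply_mul_mul_apply_neg_mul_mul_apply_neg_mul (hψ : ψ.IsPrimitive)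
    (x s y : A) :
    ∑ j, ψ (x * j) * ψ (-(j * s)) * ψ (-(j * y)) =
      if s = x - y then (Fintype.card A : K) else 0 := by
  have hprod : ∀ j, ψ (x * j) * ψ (-(j * s)) * ψ (-(j * y)) = ψ (j * (x - s - y)) := by
    intro j
    rw [← map_add_eq_mul, ← map_add_eq_mul]
    ring_nf
  simp only [hprod, sum_mulShift _ hψ, Nat.cast_ite, Nat.cast_zero, sub_sub, sub_eq_zero,
    eq_sub_iff_add_eq, add_comm s, eq_comm]

theorem IsPrimitive.inv_card_mul_sum_dft_mul_dft_eq_convolution (hψ : ψ.IsPrimitive)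
    (hA : (Fintype.card A : K) ≠ 0) {ι : Type*} [Fintype ι] (c : A → K) (q : ι → A)
    (p : ι → K) (x : A) :
    (Fintype.card A : K)⁻¹ * ∑ j, ψ (x * j) * (∑ s, c s * ψ (-(j * s))) *
        (∑ l, ψ (-(j * q l)) * p l) =
      ∑ l, c (x - q l) * p l := by
  have hexpand : ∑ j, ψ (x * j) * (∑ s, c s * ψ (-(j * s))) * (∑ l, ψ (-(j * q l)) * p l) =
      ∑ l, ∑ s, c s * p l * ∑ j, ψ (x * j) * ψ (-(j * s)) * ψ (-(j * q l)) := by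
    simp only [mul_sum, sum_mul]
    rw [sum_comm]
    refine sum_congr rfl fun l _ => ?_
    rw [sum_comm]
    refine sum_congr rfl fun s _ => sum_congr rfl fun j _ => ?_
    ring
  rw [hexpand]
  simp only [hψ.sum_apply_mul_mul_apply_neg_mul_mul_apply_neg_mul, mul_ite, mul_zero,
    sum_ite_eq', mem_univ, if_true]
  rw [mul_sum]
  refine sum_congr rfl fun l _ => ?_
  field_simp

end AddChar

theorem zpow_neg_val_eq_zmodChar_neg {K : Type*} [Field K] {N : ℕ} [NeZero N] {ζ : K}
    (hζ : ζ ^ N = 1) (a : ZMod N) :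
    ζ ^ (-(a.val : ℤ)) = AddChar.zmodChar N hζ (-a) := by
  rw [AddChar.map_neg_eq_inv, AddChar.zmodChar_apply, zpow_neg, zpow_natCast]

theorem toeplitz_mulVec_fourier_formula_general (M N : ℕ) [NeZero N] (ζ : ℂ)
    (hζ : ζ = Complex.exp (2 * Real.pi * Complex.I / N))
    (t : ℤ → ℂ)
    (T : Matrix (Fin M) (Fin M) ℂ)
    (hT : ∀ i j : Fin M, T i j = t ((i : ℤ) - (j : ℤ)))
    (c : ZMod N → ℂ)
    (hc : ∀ s : ℤ, -((M : ℤ) - 1) ≤ s → s ≤ (M : ℤ) - 1 → c (s : ZMod N) = t s)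
    (lam : ZMod N → ℂ)
    (hlam : ∀ j : ZMod N, lam j = ∑ s : ZMod N, c s * ζ ^ (-(((j * s).val : ℤ)))) :
    ∀ (p : Fin M → ℂ) (i : Fin M),
      T.mulVec p i =
        (N : ℂ)⁻¹ * ∑ j : ZMod N,
          ζ ^ (((((i : ℕ) : ZMod N) * j).val)) * lam j *
            (∑ l : Fin M, ζ ^ (-(((j * ((l : ℕ) : ZMod N)).val : ℤ))) * p l) := by
  intro p i
  have hprim : IsPrimitiveRoot ζ N := hζ ▸ Complex.isPrimitiveRoot_exp N (NeZero.ne N)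
  have hψ := AddChar.zmodChar_primitive_of_primitive_root N hprim
  have htoeplitz :
      ∀ l : Fin M, t ((i : ℤ) - l) = c (((i : ℕ) : ZMod N) - ((l : ℕ) : ZMod N)) := by
    intro l
    simpa using (hc ((i : ℤ) - l) (by omega) (by omega)).symm
  have hconv := hψ.inv_card_mul_sum_dft_mul_dft_eq_convolution
    (Nat.cast_ne_zero.mpr Fintype.card_ne_zero) c (fun l : Fin M => ((l : ℕ) : ZMod N)) p
    ((i : ℕ) : ZMod N)
  rw [ZMod.card] at hconv
  simp only [Matrix.mulVec, dotProduct, hT, htoeplitz, hlam,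
    zpow_neg_val_eq_zmodChar_neg hprim.pow_eq_one, ← AddChar.zmodChar_apply hprim.pow_eq_one]
  exact hconv.symm

/-- The Toeplitz matrix-vector product `T p` is computed by the
Fourier-diagonalized circulant embedding:
`T p = F̃⁻¹ Λ F̃ p`, where `F̃` consists of the first `M` columns of the `N×N`
Fourier matrix (`N = 2M − 1`), `F̃⁻¹` of the first `M` rows of its inverse, and
`Λ` is the diagonal of DFT values of the circulant generator `c`. -/
theorem toeplitz_mulVec_fourier_formula (M N : ℕ) (hM : 1 ≤ M)
    (hN : N = 2 * M - 1) [NeZero N] (ζ : ℂ)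
    (hζ : ζ = Complex.exp (2 * Real.pi * Complex.I / N))
    (t : ℤ → ℂ)
    (T : Matrix (Fin M) (Fin M) ℂ)
    (hT : ∀ i j : Fin M, T i j = t ((i : ℤ) - (j : ℤ)))
    (c : ZMod N → ℂ)
    (hc : ∀ s : ℤ, -((M : ℤ) - 1) ≤ s → s ≤ (M : ℤ) - 1 → c (s : ZMod N) = t s)
    (lam : ZMod N → ℂ)
    (hlam : ∀ j : ZMod N, lam j = ∑ s : ZMod N, c s * ζ ^ (-(((j * s).val : ℤ)))) :
    ∀ (p : Fin M → ℂ) (i : Fin M),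
      T.mulVec p i =
        (N : ℂ)⁻¹ * ∑ j : ZMod N,
          ζ ^ (((((i : ℕ) : ZMod N) * j).val)) * lam j *
            (∑ l : Fin M, ζ ^ (-(((j * ((l : ℕ) : ZMod N)).val : ℤ))) * p l) :=
  toeplitz_mulVec_fourier_formula_general M N ζ hζ t T hT c hc lam hlam
end

section
/- Let k ∈ ℝ and y ∈ ℝ³. The function u(x) = exp(i k ‖x − y‖) / (4π ‖x − y‖) satisfies the Helmholtz equation on ℝ³ \ {y}: for every x ≠ y, the sum over the three coordinate directions e₁, e₂, e₃ of the second derivative at t = 0 of the map t ↦ u(x + t·e_d) exists and Σ_{d=1}^{3} ∂²u/∂x_d²(x) + k² u(x) = 0. -/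
/-!
Along the coordinate line `t ↦ x + t eₐ` the squared distance to `y` is the quadratic
`s(t) = S + 2 vₐ t + t²` with `v = x − y`, `S = ‖v‖²`. Writing `u = g(s)` with
`g(s) = exp(i k √s) / (4π √s)`, the chain rule gives
`∂ₐ²u(x) = 2 g'(S) + 4 vₐ² g''(S)`, so `Δu + k² u = 4 S g''(S) + 6 g'(S) + k² g(S)`,
and this vanishes by a direct computation of `g'` and `g''`.
-/

open Complex Filter Topology
open scoped Real

theorem hasDerivAt_deriv_comp {F : Type*} [NormedAddCommGroup F] [NormedSpace ℝ F]
    {g g' : ℝ → F} {g'' : F} {q q' : ℝ → ℝ} {q'' t : ℝ}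
    (hg : ∀ᶠ s in 𝓝 (q t), HasDerivAt g (g' s) s) (hg' : HasDerivAt g' g'' (q t))
    (hq : ∀ᶠ u in 𝓝 t, HasDerivAt q (q' u) u) (hq' : HasDerivAt q' q'' t) :
    HasDerivAt (deriv fun u => g (q u)) (q' t • q' t • g'' + q'' • g' (q t)) t := by
  have hg_near : ∀ᶠ u in 𝓝 t, HasDerivAt g (g' (q u)) (q u) :=
    hq.self_of_nhds.continuousAt.tendsto.eventually hg
  have hderiv : (deriv fun u => g (q u)) =ᶠ[𝓝 t] fun u => q' u • g' (q u) := by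
    filter_upwards [hg_near, hq] with u hgu hqu
    exact (hgu.scomp u hqu).deriv
  exact (hq'.smul (hg'.scomp t hq.self_of_nhds)).congr_of_eventuallyEq hderiv

theorem hasDerivAt_deriv_comp_quadratic {F : Type*} [NormedAddCommGroup F] [NormedSpace ℝ F]
    {g g' : ℝ → F} {g'' : F} {S b : ℝ}
    (hg : ∀ᶠ s in 𝓝 S, HasDerivAt g (g' s) s) (hg' : HasDerivAt g' g'' S) :
    HasDerivAt (deriv fun t => g (S + 2 * b * t + t ^ 2))
      ((4 * b ^ 2) • g'' + (2 : ℝ) • g' S) 0 := by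
  have hq : ∀ t, HasDerivAt (fun t => S + 2 * b * t + t ^ 2) (2 * b + 2 * t) t := fun t =>
    ((((hasDerivAt_id t).const_mul (2 * b)).const_add S).add (hasDerivAt_pow 2 t)).congr_deriv
      (by simp)
  have hq' : HasDerivAt (fun t => 2 * b + 2 * t) 2 0 := by
    simpa using ((hasDerivAt_id (0 : ℝ)).const_mul 2).const_add (2 * b)
  have hq0 : S + 2 * b * 0 + 0 ^ 2 = S := by simp
  refine (hasDerivAt_deriv_comp (hq0 ▸ hg) (hq0 ▸ hg') (.of_forall hq) hq').congr_deriv ?_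
  rw [hq0, smul_smul]
  ring_nf

theorem EuclideanSpace.norm_add_smul_single_sq {ι : Type*} [Fintype ι] [DecidableEq ι]
    (v : EuclideanSpace ℝ ι) (i : ι) (t : ℝ) :
    ‖v + t • EuclideanSpace.single i (1 : ℝ)‖ ^ 2 = ‖v‖ ^ 2 + 2 * v i * t + t ^ 2 := by
  rw [norm_add_sq_real, real_inner_smul_right, EuclideanSpace.inner_single_right, norm_smul,
    PiLp.norm_single]
  simp only [conj_trivial, one_mul, norm_one, mul_one, Real.norm_eq_abs, sq_abs]
  ring

namespace Helmholtz

/-- The Green's function as a function of the squared distance `s`. -/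
noncomputable def profile (k s : ℝ) : ℂ :=
  exp (I * k * Real.sqrt s) / (4 * π * Real.sqrt s)

noncomputable def profileDeriv (k s : ℝ) : ℂ :=
  exp (I * k * Real.sqrt s) * (I * k * Real.sqrt s - 1) / (8 * π * (Real.sqrt s : ℂ) ^ 3)

noncomputable def profileDeriv2 (k s : ℝ) : ℂ :=
  exp (I * k * Real.sqrt s) * ((I * k * Real.sqrt s) ^ 2 - 3 * (I * k * Real.sqrt s) + 3) /
    (16 * π * (Real.sqrt s : ℂ) ^ 5)

theorem helmholtzG_eq_profile (k : ℝ) (x y : EuclideanSpace ℝ (Fin 3)) :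
    helmholtzG k x y = profile k (‖x - y‖ ^ 2) := by
  rw [helmholtzG, profile, Real.sqrt_sq (norm_nonneg _)]

variable (k : ℝ) {s : ℝ}

theorem hasDerivAt_ofReal_sqrt (hs : s ≠ 0) :
    HasDerivAt (fun u : ℝ => (Real.sqrt u : ℂ)) (1 / (2 * Real.sqrt s) : ℝ) s :=
  (Real.hasDerivAt_sqrt hs).ofReal_comp

theorem ofReal_sqrt_ne_zero (hs : 0 < s) : (Real.sqrt s : ℂ) ≠ 0 :=
  ofReal_ne_zero.2 (Real.sqrt_pos.2 hs).ne'

theorem hasDerivAt_profile (hs : 0 < s) : HasDerivAt (profile k) (profileDeriv k s) s := by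
  have hr := ofReal_sqrt_ne_zero hs
  have hsqrt := hasDerivAt_ofReal_sqrt hs.ne'
  refine ((hsqrt.const_mul (I * k)).cexp.div (hsqrt.const_mul (4 * (π : ℂ)))
    (by simp [hr, Real.pi_ne_zero])).congr_deriv ?_
  rw [profileDeriv]
  push_cast
  field_simp
  ring

theorem hasDerivAt_profileDeriv (hs : 0 < s) :
    HasDerivAt (profileDeriv k) (profileDeriv2 k s) s := by
  have hr := ofReal_sqrt_ne_zero hs
  have hsqrt := hasDerivAt_ofReal_sqrt hs.ne'
  have hexp := (hsqrt.const_mul (I * k)).cexp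
  refine ((hexp.mul ((hsqrt.const_mul (I * k)).sub_const 1)).div
    ((hsqrt.pow 3).const_mul (8 * (π : ℂ))) (by simp [hr])).congr_deriv ?_
  simp only [profileDeriv2, Pi.mul_apply, Pi.pow_apply]
  push_cast
  field_simp
  ring

/-- The radial Helmholtz equation in the variable `s = r²`. -/
theorem profile_ode (hs : 0 < s) :
    4 * (s : ℂ) * profileDeriv2 k s + 6 * profileDeriv k s + (k : ℂ) ^ 2 * profile k s = 0 := by
  have hr := ofReal_sqrt_ne_zero hs
  have hsq : (s : ℂ) = (Real.sqrt s : ℂ) ^ 2 := by exact_mod_cast (Real.sq_sqrt hs.le).symm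
  rw [profile, profileDeriv, profileDeriv2, hsq]
  generalize exp (I * k * Real.sqrt s) = E
  field_simp
  linear_combination (128 * (Real.sqrt s : ℂ) ^ 2 * (k : ℂ) ^ 2 * E) * I_sq

end Helmholtz

open Helmholtz in
/-- The free-space Helmholtz Green's function `u(x) = G(x, y)` satisfies the
Helmholtz equation `Δu + k²u = 0` away from the source point `y`: at every
`x ≠ y` the second derivatives along the three coordinate directions exist and
their sum plus `k² u(x)` vanishes. -/
theorem helmholtzG_satisfies_helmholtz_equation (k : ℝ)
    (y x : EuclideanSpace ℝ (Fin 3)) (hxy : x ≠ y) :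
    ∃ D : Fin 3 → ℂ,
      (∀ d : Fin 3,
        HasDerivAt
          (deriv fun t : ℝ =>
            helmholtzG k (x + t • EuclideanSpace.single d (1 : ℝ)) y)
          (D d) 0) ∧
      (∑ d : Fin 3, D d) + (k : ℂ) ^ 2 * helmholtzG k x y = 0 := by
  set v := x - y
  set S := ‖v‖ ^ 2
  have hS : 0 < S := by positivity [sub_ne_zero.2 hxy]
  refine ⟨fun d => 4 * (v d : ℂ) ^ 2 * profileDeriv2 k S + 2 * profileDeriv k S,
    fun d => ?_, ?_⟩
  · have hline : (fun t : ℝ => helmholtzG k (x + t • EuclideanSpace.single d (1 : ℝ)) y) =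
        fun t => profile k (S + 2 * v d * t + t ^ 2) := by
      ext t
      rw [helmholtzG_eq_profile, add_sub_right_comm, EuclideanSpace.norm_add_smul_single_sq]
    rw [hline]
    refine (hasDerivAt_deriv_comp_quadratic
      ((eventually_gt_nhds hS).mono fun s hs => hasDerivAt_profile k hs)
      (hasDerivAt_profileDeriv k hS)).congr_deriv ?_
    simp only [real_smul]
    push_cast
    ring
  · have hnorm : (S : ℂ) = ∑ d, (v d : ℂ) ^ 2 := by
      exact_mod_cast EuclideanSpace.real_norm_sq_eq v
    rw [helmholtzG_eq_profile, Finset.sum_add_distrib, ← Finset.sum_mul, ← Finset.mul_sum,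
      ← hnorm, Finset.sum_const, Finset.card_univ, Fintype.card_fin, nsmul_eq_mul]
    linear_combination profile_ode k hS
end
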